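/- Let D be a positive odd squarefree integer with D ≡ 3 (mod 4). Then E_D(-1,1) + E_D(-2,2) ≤ E_D(1,1) ≤ 2·E_D(-1,1) + 2·E_D(-2,2), where E_D(u,v) = #{(a,b): D = ab, ua ≡ □ (mod b), vb ≡ □ (mod a)}. -/

import Mathlib

open Finset

/-- `E_D(u,v)`: number of pairs `(a,b)` of positive integers with `D = a*b`,
`u*a` a square mod `b` and `v*b` a square mod `a`. -/
noncomputable def Ecard (D : ℕ) (u v : ℤ) : ℕ :=
  Set.ncard {p : ℕ × ℕ | 0 < p.1 ∧ 0 < p.2 ∧ p.1 * p.2 = D ∧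
    (∃ n : ℤ, u * p.1 ≡ n ^ 2 [ZMOD (p.2 : ℤ)]) ∧
    (∃ n : ℤ, v * p.2 ≡ n ^ 2 [ZMOD (p.1 : ℤ)])}

/-- `σ_D(s,t,u,v)`. -/
def sigmaSum (D : ℕ) (s t u v : ℤ) : ℤ :=
  ∑ a ∈ D.divisors,
    (∏ p ∈ (D / a).primeFactors, (jacobiSym s p + jacobiSym (u * a) p)) *
    (∏ p ∈ a.primeFactors, (jacobiSym t p + jacobiSym (v * (D / a)) p))

/-- `S_D(u,v) = σ_D(1,1,u,v)`. -/
def Ssum (D : ℕ) (u v : ℤ) : ℤ :=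
  ∑ a ∈ D.divisors,
    (∏ p ∈ (D / a).primeFactors, (1 + jacobiSym (u * a) p)) *
    (∏ p ∈ a.primeFactors, (1 + jacobiSym (v * (D / a)) p))

private lemma isSquare_zmod_of_dvd {b p : ℕ} (h : p ∣ b) {m : ℤ} (hm : IsSquare (m : ZMod b)) :
    IsSquare (m : ZMod p) := by
  have := hm.map (ZMod.castHom h (ZMod p))
  rwa [map_intCast] at this

private lemma isSquare_zmod_of_forall : ∀ (b : ℕ), Squarefree b → ∀ (m : ℤ),
    (∀ p ∈ b.primeFactors, IsSquare (m : ZMod p)) → IsSquare (m : ZMod b) := by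
  intro b
  induction b using Nat.strong_induction_on with
  | _ b ih =>
    intro hb m h
    rcases eq_or_ne b 1 with rfl | hb1
    · exact ⟨0, Subsingleton.elim _ _⟩
    obtain ⟨p, hp, c, rfl⟩ := Nat.exists_prime_and_dvd hb1
    obtain ⟨hco, hsp, hsc⟩ := Nat.squarefree_mul_iff.mp hb
    have hc0 : c ≠ 0 := fun h0 => hb.ne_zero (by simp [h0])
    have hlt : c < p * c := lt_mul_iff_one_lt_left (Nat.pos_of_ne_zero hc0) |>.mpr hp.one_lt
    have h1 : IsSquare (m : ZMod p) := h p (Nat.mem_primeFactors.mpr ⟨hp, ⟨c, rfl⟩, hb.ne_zero⟩)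
    have h2 : IsSquare (m : ZMod c) := ih c hlt hsc m (fun q hq => h q (by
      rw [Nat.primeFactors_mul hp.ne_zero hc0]; exact Finset.mem_union_right _ hq))
    obtain ⟨x, hx⟩ := h1
    obtain ⟨y, hy⟩ := h2
    have e := ZMod.chineseRemainder hco
    refine ⟨e.symm (x, y), ?_⟩
    apply e.injective
    rw [map_mul, RingEquiv.apply_symm_apply, map_intCast]
    have : ((m : ℤ) : ZMod p × ZMod c) = ((m : ZMod p), (m : ZMod c)) := by
      simp [Prod.ext_iff]
    rw [this]
    exact Prod.ext hx hy

private lemma isSquare_zmod_iff {b : ℕ} (hb : Squarefree b) (m : ℤ) :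
    IsSquare (m : ZMod b) ↔ ∀ p ∈ b.primeFactors, IsSquare (m : ZMod p) :=
  ⟨fun h p hp => isSquare_zmod_of_dvd (Nat.dvd_of_mem_primeFactors hp) h,
   isSquare_zmod_of_forall b hb m⟩

private lemma isSquare_iff_jacobi {p : ℕ} (hp : p.Prime) {m : ℤ} (hm : ¬ (p:ℤ) ∣ m) :
    IsSquare (m : ZMod p) ↔ jacobiSym m p = 1 := by
  haveI : Fact p.Prime := ⟨hp⟩
  rw [← jacobiSym.legendreSym.to_jacobiSym]
  exact (legendreSym.eq_one_iff p (by rwa [Ne, ZMod.intCast_zmod_eq_zero_iff_dvd])).symm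

/-- the additive avatar of the Jacobi symbol -/
private def lg (m : ℤ) (p : ℕ) : ZMod 2 := if jacobiSym m p = 1 then 0 else 1

private lemma lg_eq_zero_iff {m : ℤ} {p : ℕ} : lg m p = 0 ↔ jacobiSym m p = 1 := by
  unfold lg; split <;> simp_all

private lemma lg_one (p : ℕ) : lg 1 p = 0 := lg_eq_zero_iff.mpr (jacobiSym.one_left p)

private lemma jacobi_eq_lg {m : ℤ} {p : ℕ} (h : m.gcd p = 1) :
    jacobiSym m p = if lg m p = 0 then 1 else -1 := by
  rcases jacobiSym.eq_one_or_neg_one h with h1 | h1 <;> unfold lg <;> rw [h1] <;> norm_num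

private lemma lg_mul {m n : ℤ} {p : ℕ} (hm : m.gcd p = 1) (hn : n.gcd p = 1) :
    lg (m * n) p = lg m p + lg n p := by
  have h2 := jacobi_eq_lg hm
  have h3 := jacobi_eq_lg hn
  have h1 : jacobiSym (m * n) p = jacobiSym m p * jacobiSym n p := jacobiSym.mul_left m n p
  rw [h2, h3] at h1
  have e2 : ∀ x : ZMod 2, x = 0 ∨ x = 1 := by decide
  rcases e2 (lg m p) with h4 | h4 <;> rcases e2 (lg n p) with h5 | h5 <;>
    rw [h4, h5] at h1 <;> norm_num at h1 <;> rw [h4, h5] <;> simp [lg, h1] <;> decide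

private lemma lg_neg_one_eq_zero {p : ℕ} (hp : Odd p) (h1 : p % 4 = 1) : lg (-1) p = 0 := by
  rw [lg_eq_zero_iff, jacobiSym.at_neg_one hp, ZMod.χ₄_nat_one_mod_four h1]

private lemma lg_neg_one_eq_one {p : ℕ} (hp : Odd p) (h3 : p % 4 = 3) : lg (-1) p = 1 := by
  unfold lg
  rw [jacobiSym.at_neg_one hp, ZMod.χ₄_nat_three_mod_four h3]
  norm_num

private lemma lg_symm {p q : ℕ} (hp : p.Prime) (hq : q.Prime) (hp2 : p ≠ 2) (hq2 : q ≠ 2)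
    (hne : p ≠ q) : lg (q : ℤ) p + lg (p : ℤ) q = lg (-1) p * lg (-1) q := by
  have hpo : Odd p := hp.odd_of_ne_two hp2
  have hqo : Odd q := hq.odd_of_ne_two hq2
  have hgpq : (p : ℤ).gcd q = 1 := by
    rw [Int.gcd_natCast_natCast]; exact (Nat.coprime_primes hp hq).mpr hne
  have hgqp : (q : ℤ).gcd p = 1 := by
    rw [Int.gcd_natCast_natCast]; exact (Nat.coprime_primes hq hp).mpr hne.symm
  rcases Nat.odd_mod_four_iff.mp (Nat.odd_iff.mp hpo) with h1 | h3
  · have : jacobiSym (p : ℤ) q = jacobiSym (q : ℤ) p :=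
      jacobiSym.quadratic_reciprocity_one_mod_four h1 hqo
    have hl : lg (p : ℤ) q = lg (q : ℤ) p := by unfold lg; rw [this]
    have e2 : ∀ x : ZMod 2, x + x = 0 := by decide
    rw [hl, lg_neg_one_eq_zero hpo h1, zero_mul, e2]
  · rcases Nat.odd_mod_four_iff.mp (Nat.odd_iff.mp hqo) with h1' | h3'
    · have : jacobiSym (q : ℤ) p = jacobiSym (p : ℤ) q :=
        jacobiSym.quadratic_reciprocity_one_mod_four h1' hpo
      have hl : lg (q : ℤ) p = lg (p : ℤ) q := by unfold lg; rw [this]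
      have e2 : ∀ x : ZMod 2, x + x = 0 := by decide
      rw [hl, lg_neg_one_eq_zero hqo h1', mul_zero, e2]
    · have hqr : jacobiSym (p : ℤ) q = -jacobiSym (q : ℤ) p :=
        jacobiSym.quadratic_reciprocity_three_mod_four h3 h3'
      rw [lg_neg_one_eq_one hpo h3, lg_neg_one_eq_one hqo h3', mul_one]
      have e2 : ∀ x : ZMod 2, x = 0 ∨ x = 1 := by decide
      rw [jacobi_eq_lg hgqp, jacobi_eq_lg hgpq] at hqr
      rcases e2 (lg (q : ℤ) p) with h | h <;> rcases e2 (lg (p : ℤ) q) with h' | h' <;>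
        rw [h, h'] at hqr ⊢ <;> simp at hqr ⊢ <;> decide

private lemma lg_prod {p : ℕ} {s : Finset ℕ} (h : ∀ q ∈ s, (q : ℤ).gcd p = 1) :
    lg (∏ q ∈ s, (q : ℤ)) p = ∑ q ∈ s, lg (q : ℤ) p := by
  induction s using Finset.induction_on with
  | empty => simp [lg_one]
  | @insert a s ha ih =>
    rw [Finset.prod_insert ha, Finset.sum_insert ha,
      lg_mul (h a (Finset.mem_insert_self a s)) ?_, ih (fun q hq => h q (Finset.mem_insert_of_mem hq))]
    rw [← Int.isCoprime_iff_gcd_eq_one]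
    exact IsCoprime.prod_left fun q hq =>
      Int.isCoprime_iff_gcd_eq_one.mpr (h q (Finset.mem_insert_of_mem hq))

private lemma chi4_prod (s : Finset ℕ) (hodd : ∀ q ∈ s, Odd q) :
    (if (∑ q ∈ s, lg (-1) q) = 0 then (1 : ℤ) else -1) = ZMod.χ₄ ((∏ q ∈ s, q : ℕ) : ZMod 4) := by
  induction s using Finset.induction_on with
  | empty => simp
  | @insert a s ha ih =>
    have hao : Odd a := hodd a (Finset.mem_insert_self a s)
    have ihs := ih (fun q hq => hodd q (Finset.mem_insert_of_mem hq))
    rw [Finset.prod_insert ha, Finset.sum_insert ha, Nat.cast_mul, map_mul, ← ihs]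
    have ha4 : ZMod.χ₄ (a : ZMod 4) = if lg (-1) a = 0 then (1 : ℤ) else -1 := by
      rcases Nat.odd_mod_four_iff.mp (Nat.odd_iff.mp hao) with h1 | h3
      · rw [ZMod.χ₄_nat_one_mod_four h1, lg_neg_one_eq_zero hao h1]; norm_num
      · rw [ZMod.χ₄_nat_three_mod_four h3, lg_neg_one_eq_one hao h3]; norm_num
    rw [ha4]
    have e2 : ∀ x : ZMod 2, x = 0 ∨ x = 1 := by decide
    rcases e2 (lg (-1) a) with h | h <;> rcases e2 (∑ q ∈ s, lg (-1) q) with h' | h' <;>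
      rw [h, h'] <;> norm_num <;> decide

private lemma sum_lg_neg_one {D : ℕ} (hD : Odd D) (hsq : Squarefree D) (hmod : D % 4 = 3) :
    ∑ p ∈ D.primeFactors, lg (-1) p = 1 := by
  have hodd : ∀ q ∈ D.primeFactors, Odd q := by
    intro q hq
    have hqp := Nat.prime_of_mem_primeFactors hq
    rcases hqp.eq_two_or_odd' with rfl | h
    · have h2 : 2 ∣ D := Nat.dvd_of_mem_primeFactors hq
      have := Nat.odd_iff.mp hD
      omega
    · exact h
  have := chi4_prod D.primeFactors hodd
  rw [Nat.prod_primeFactors_of_squarefree hsq, ZMod.χ₄_nat_three_mod_four hmod] at this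
  split at this
  · norm_num at this
  · rename_i h
    have e2 : ∀ x : ZMod 2, x = 0 ∨ x = 1 := by decide
    rcases e2 (∑ p ∈ D.primeFactors, lg (-1) p) with h' | h'
    · exact absurd h' h
    · exact h'

section Counting

variable {n : Type*} [Fintype n] [DecidableEq n]

private lemma vadd_self (v : n → ZMod 2) : v + v = 0 := by
  funext p
  have : ∀ x : ZMod 2, x + x = 0 := by decide
  exact this _

private lemma helper3 : ∀ a b c : ZMod 2, a + b + c + c + b = a := by decide

private lemma zadd_self : ∀ x : ZMod 2, x + x = 0 := by decide

/-- nonempty fibers of a linear map have maximal cardinality among fibers -/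
private lemma fiber_card_le (M : Matrix n n (ZMod 2)) (c c' : n → ZMod 2)
    (h : ∃ x, M.mulVec x = c) :
    Nat.card {x | M.mulVec x = c'} ≤ Nat.card {x | M.mulVec x = c} := by
  rcases eq_or_ne {x | M.mulVec x = c'} ∅ with he | hne
  · rw [he]; simp
  · obtain ⟨z', hz'⟩ := Set.nonempty_iff_ne_empty.mpr hne
    obtain ⟨z, hz⟩ := h
    simp only [Set.mem_setOf_eq] at hz'
    apply le_of_eq
    apply Nat.card_congr
    refine ⟨fun ⟨x, hx⟩ => ⟨x + z' + z, ?_⟩, fun ⟨y, hy⟩ => ⟨y + z + z', ?_⟩, ?_, ?_⟩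
    · simp only [Set.mem_setOf_eq] at hx ⊢
      rw [Matrix.mulVec_add, Matrix.mulVec_add, hx, hz', hz, vadd_self, zero_add]
    · simp only [Set.mem_setOf_eq] at hy ⊢
      rw [Matrix.mulVec_add, Matrix.mulVec_add, hy, hz, hz', vadd_self, zero_add]
    · rintro ⟨x, hx⟩
      simp only [Subtype.mk.injEq]
      funext p
      exact helper3 (x p) (z' p) (z p)
    · rintro ⟨y, hy⟩
      simp only [Subtype.mk.injEq]
      funext p
      exact helper3 (y p) (z p) (z' p)

private lemma card_ker_pow (M : Matrix n n (ZMod 2)) :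
    Nat.card {x | M.mulVec x = 0} =
      2 ^ Module.finrank (ZMod 2) (LinearMap.ker M.mulVecLin) := by
  have e : {x | M.mulVec x = 0} ≃ LinearMap.ker M.mulVecLin :=
    Equiv.subtypeEquivRight (fun x => by
      simp [LinearMap.mem_ker, Matrix.mulVecLin_apply])
  rw [Nat.card_congr e]
  haveI : Fintype (LinearMap.ker M.mulVecLin) := Fintype.ofFinite _
  rw [Nat.card_eq_fintype_card, Module.card_eq_pow_finrank (K := ZMod 2), ZMod.card]

private lemma card_ker_transpose (M : Matrix n n (ZMod 2)) :
    Nat.card {x | M.mulVec x = 0} = Nat.card {x | M.transpose.mulVec x = 0} := by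
  rw [card_ker_pow, card_ker_pow]
  congr 1
  have h1 := LinearMap.finrank_range_add_finrank_ker M.mulVecLin
  have h2 := LinearMap.finrank_range_add_finrank_ker M.transpose.mulVecLin
  have h3 : M.transpose.rank = M.rank := Matrix.rank_transpose M
  unfold Matrix.rank at h3
  omega

private lemma card_double (M : Matrix n n (ZMod 2)) (d : n → ZMod 2)
    (hone : M.mulVec 1 = 0) (hphi : ∑ p, d p = 1) :
    Nat.card {x | M.mulVec x = 0} =
      2 * Nat.card {x | M.mulVec x = 0 ∧ ∑ p, d p * x p = 0} := by
  have hphix : ∀ (x : n → ZMod 2) (c : ZMod 2),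
      ∑ p, d p * (x p + c) = (∑ p, d p * x p) + c := by
    intro x c
    calc ∑ p, d p * (x p + c) = ∑ p, (d p * x p + d p * c) := by
          exact Finset.sum_congr rfl (fun p _ => mul_add _ _ _)
      _ = (∑ p, d p * x p) + ∑ p, d p * c := Finset.sum_add_distrib
      _ = (∑ p, d p * x p) + (∑ p, d p) * c := by rw [Finset.sum_mul]
      _ = _ := by rw [hphi, one_mul]
  have hMx : ∀ (x : n → ZMod 2) (c : ZMod 2), M.mulVec (x + fun _ => c) =
      M.mulVec x + c • M.mulVec 1 := by
    intro x c
    have : (x + fun _ => c) = x + c • (1 : n → ZMod 2) := by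
      funext p; simp [Pi.smul_apply, smul_eq_mul]
    rw [this, Matrix.mulVec_add, Matrix.mulVec_smul]
  have key : {x | M.mulVec x = 0} ≃
      {x | M.mulVec x = 0 ∧ ∑ p, d p * x p = 0} × ZMod 2 := by
    refine ⟨fun ⟨x, hx⟩ => ⟨⟨x + fun _ => (∑ p, d p * x p), ?_, ?_⟩, ∑ p, d p * x p⟩,
      fun ⟨⟨y, hy1, hy2⟩, c⟩ => ⟨y + fun _ => c, ?_⟩, ?_, ?_⟩
    · simp only [Set.mem_setOf_eq] at hx
      rw [hMx, hx, hone, smul_zero, add_zero]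
    · simp only [Pi.add_apply]
      rw [hphix]
      exact zadd_self _
    · simp only [Set.mem_setOf_eq] at hy1 ⊢
      rw [hMx, hy1, hone, smul_zero, add_zero]
    · rintro ⟨x, hx⟩
      simp only [Subtype.mk.injEq]
      funext p
      simp only [Pi.add_apply]
      have h2 : ∀ a b : ZMod 2, a + b + b = a := by decide
      exact h2 _ _
    · rintro ⟨⟨y, hy1, hy2⟩, c⟩
      simp only [Prod.mk.injEq, Subtype.mk.injEq]
      constructor
      · funext p
        simp only [Pi.add_apply]
        rw [hphix y c, hy2, zero_add]
        have : ∀ a b : ZMod 2, a + b + b = a := by decide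
        exact this _ _
      · simp only [Pi.add_apply]
        rw [hphix y c, hy2, zero_add]
  rw [Nat.card_congr key, Nat.card_prod, Nat.card_zmod, mul_comm]

private lemma mulVec_eq (M : Matrix n n (ZMod 2)) (v : n → ZMod 2) (p : n) :
    M.mulVec v p = ∑ q, M p q * v q := by
  simp [Matrix.mulVec, dotProduct]

private lemma card_ker_eq_two_mul (X : Matrix n n (ZMod 2)) (d : n → ZMod 2)
    (hrow : ∀ p, ∑ q, X p q = 0)
    (htr : ∀ p q, p ≠ q → X q p = X p q + d p * d q)
    (hd : ∑ p, d p = 1) :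
    Nat.card {x | X.mulVec x = 0} =
      2 * Nat.card {x | (X + Matrix.diagonal d).mulVec x = 0} := by
  have hmulself : ∀ x : ZMod 2, x * x = x := by decide
  have htr' : ∀ p q, X q p = X p q + d p * d q + (if q = p then d p else 0) := by
    intro p q
    rcases eq_or_ne q p with rfl | h
    · rw [if_pos rfl, hmulself]
      have : ∀ a b : ZMod 2, a = a + b + b := by decide
      exact this _ _
    · rw [if_neg h, add_zero]
      exact htr p q (Ne.symm h)
  set Y := X + Matrix.diagonal d with hY
  have hYpq : ∀ p q, Y p q = X p q + (if q = p then d p else 0) := by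
    intro p q
    simp only [hY, Matrix.add_apply, Matrix.diagonal_apply]
    rcases eq_or_ne q p with rfl | h
    · simp
    · rw [if_neg (Ne.symm h), if_neg h]
  have claim1 : ∀ x p, X.transpose.mulVec x p = Y.mulVec x p + (∑ q, d q * x q) * d p := by
    intro x p
    rw [mulVec_eq, mulVec_eq]
    calc ∑ q, X.transpose p q * x q = ∑ q, (X p q * x q + d p * d q * x q
          + (if q = p then d p else 0) * x q) := by
          refine Finset.sum_congr rfl (fun q _ => ?_)
          rw [Matrix.transpose_apply, htr' p q, add_mul, add_mul]
      _ = (∑ q, X p q * x q) + (∑ q, d p * d q * x q)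
          + ∑ q, (if q = p then d p else 0) * x q := by
          rw [Finset.sum_add_distrib, Finset.sum_add_distrib]
      _ = (∑ q, X p q * x q) + d p * x p + (∑ q, d q * x q) * d p := by
          have e1 : ∑ q, (if q = p then d p else 0) * x q = d p * x p := by
            simp [ite_mul, Finset.sum_ite_eq']
          have e2 : ∑ q, d p * d q * x q = (∑ q, d q * x q) * d p := by
            rw [Finset.sum_mul]
            exact Finset.sum_congr rfl (fun q _ => by ring)
          rw [e1, e2]; ring
      _ = (∑ q, Y p q * x q) + (∑ q, d q * x q) * d p := by
          have e1 : ∑ q, (if q = p then d p else 0) * x q = d p * x p := by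
            simp [ite_mul, Finset.sum_ite_eq']
          have : ∑ q, Y p q * x q = (∑ q, X p q * x q) + d p * x p := by
            calc ∑ q, Y p q * x q
                = ∑ q, (X p q * x q + (if q = p then d p else 0) * x q) :=
                  Finset.sum_congr rfl (fun q _ => by rw [hYpq p q, add_mul])
              _ = _ := by rw [Finset.sum_add_distrib, e1]
          rw [this]
  have colsum : ∀ q, ∑ p, X p q = 0 := by
    intro q
    calc ∑ p, X p q = ∑ p, (X q p + d q * d p + (if p = q then d q else 0)) :=
          Finset.sum_congr rfl (fun p _ => htr' q p)
      _ = (∑ p, X q p) + (∑ p, d q * d p) + ∑ p, (if p = q then d q else 0) := by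
          rw [Finset.sum_add_distrib, Finset.sum_add_distrib]
      _ = 0 + d q + d q := by
          rw [hrow q, ← Finset.mul_sum, hd, mul_one]
          congr 1
          simp [Finset.sum_ite_eq']
      _ = 0 := by
          rw [zero_add]; exact zadd_self _
  have hone_t : X.transpose.mulVec 1 = 0 := by
    funext q
    rw [mulVec_eq]
    simp only [Pi.one_apply, mul_one]
    calc ∑ p, X.transpose q p = ∑ p, X p q :=
          Finset.sum_congr rfl (fun p _ => Matrix.transpose_apply _ _ _)
      _ = 0 := colsum q
  have kerY_phi : ∀ x, Y.mulVec x = 0 → ∑ q, d q * x q = 0 := by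
    intro x hx
    have h0 : ∑ p, Y.mulVec x p = 0 := by rw [hx]; simp
    rw [Finset.sum_congr rfl (fun p _ => mulVec_eq Y x p), Finset.sum_comm] at h0
    calc ∑ q, d q * x q = ∑ q, (∑ p, Y p q) * x q := by
          refine Finset.sum_congr rfl (fun q _ => ?_)
          have hcs : ∑ p, Y p q = d q := by
            calc ∑ p, Y p q = ∑ p, (X p q + (if q = p then d p else 0)) :=
                  Finset.sum_congr rfl (fun p _ => hYpq p q)
              _ = (∑ p, X p q) + ∑ p, (if q = p then d p else 0) := Finset.sum_add_distrib
              _ = d q := by rw [colsum q, zero_add]; simp [Finset.sum_ite_eq]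
          rw [hcs]
      _ = ∑ q, ∑ p, Y p q * x q := by
          refine Finset.sum_congr rfl (fun q _ => ?_)
          rw [Finset.sum_mul]
      _ = 0 := h0
  have seteq : {x | Y.mulVec x = 0} =
      {x | X.transpose.mulVec x = 0 ∧ ∑ q, d q * x q = 0} := by
    ext x
    simp only [Set.mem_setOf_eq]
    constructor
    · intro hx
      have hphi := kerY_phi x hx
      refine ⟨funext fun p => ?_, hphi⟩
      simp [claim1 x p, hx, hphi]
    · rintro ⟨hx, hphi⟩
      funext p
      have h := claim1 x p
      rw [hx, hphi] at h
      simpa using h.symm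
  rw [card_ker_transpose X, card_double X.transpose d hone_t hd, ← seteq]

end Counting

section Encoding

variable {D : ℕ}

private lemma odd_of_pf (hD : Odd D) {p : ℕ} (hp : p ∈ D.primeFactors) : Odd p ∧ p ≠ 2 := by
  have hqp := Nat.prime_of_mem_primeFactors hp
  rcases hqp.eq_two_or_odd' with rfl | h
  · have h2 : 2 ∣ D := Nat.dvd_of_mem_primeFactors hp
    have := Nat.odd_iff.mp hD
    omega
  · exact ⟨h, fun h2 => by subst h2; exact (Nat.not_odd_iff_even.mpr (by decide)) h⟩

/-- the encoding map from vectors to pairs of complementary divisors -/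
private def Fmap (D : ℕ) (x : {p : ℕ // p ∈ D.primeFactors} → ZMod 2) : ℕ × ℕ :=
  (∏ p ∈ Finset.univ.filter (fun p => x p = 1), (p : ℕ),
   ∏ p ∈ Finset.univ.filter (fun p => x p = 0), (p : ℕ))

private lemma prod_filter_primeFactors {D : ℕ} (s : Finset {p : ℕ // p ∈ D.primeFactors}) :
    (∏ p ∈ s, (p : ℕ)).primeFactors = s.image Subtype.val := by
  have : ∏ p ∈ s, (p : ℕ) = ∏ q ∈ s.image Subtype.val, q := by
    rw [Finset.prod_image (fun a _ b _ hab => Subtype.ext hab)]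
  rw [this, Nat.primeFactors_prod (by
    intro q hq
    simp only [Finset.mem_image] at hq
    obtain ⟨r, _, rfl⟩ := hq
    exact Nat.prime_of_mem_primeFactors r.2)]

private lemma Fmap_injective : Function.Injective (Fmap D) := by
  intro x y h
  have h1 := congrArg Prod.fst h
  simp only [Fmap] at h1
  have h2 : ((Finset.univ.filter (fun p => x p = 1)).image Subtype.val) =
      ((Finset.univ.filter (fun p => y p = 1)).image Subtype.val) := by
    rw [← prod_filter_primeFactors, ← prod_filter_primeFactors, h1]
  funext p
  have hmem : ∀ z : {p : ℕ // p ∈ D.primeFactors} → ZMod 2, ((p : ℕ) ∈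
      ((Finset.univ.filter (fun q => z q = 1)).image Subtype.val) ↔ z p = 1) := by
    intro z
    simp only [Finset.mem_image, Finset.mem_filter, Finset.mem_univ, true_and]
    constructor
    · rintro ⟨q, hq, hqp⟩
      rwa [← Subtype.ext hqp]
    · intro h'
      exact ⟨p, h', rfl⟩
  have e2 : ∀ a : ZMod 2, a = 0 ∨ a = 1 := by decide
  have hiff : x p = 1 ↔ y p = 1 := by rw [← hmem x, h2, hmem y]
  rcases e2 (x p) with hx | hx <;> rcases e2 (y p) with hy | hy <;>
    rw [hx, hy] <;> rw [hx, hy] at hiff <;> simp_all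

private lemma zadd_self' : ∀ x : ZMod 2, x + x = 0 := by decide
private lemma zmod2_cases : ∀ a : ZMod 2, a = 0 ∨ a = 1 := by decide
private lemma zmod2_addeq : ∀ a b : ZMod 2, (a + b = 0 ↔ b = a) := by decide

private lemma Fmap_fst_primeFactors (x : {p : ℕ // p ∈ D.primeFactors} → ZMod 2) :
    (Fmap D x).1.primeFactors = (Finset.univ.filter (fun p => x p = 1)).image Subtype.val := by
  unfold Fmap
  exact prod_filter_primeFactors (Finset.univ.filter (fun p => x p = 1))

private lemma Fmap_snd_primeFactors (x : {p : ℕ // p ∈ D.primeFactors} → ZMod 2) :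
    (Fmap D x).2.primeFactors = (Finset.univ.filter (fun p => x p = 0)).image Subtype.val := by
  unfold Fmap
  exact prod_filter_primeFactors (Finset.univ.filter (fun p => x p = 0))

private lemma Fmap_mul (hsq : Squarefree D) (x : {p : ℕ // p ∈ D.primeFactors} → ZMod 2) :
    (Fmap D x).1 * (Fmap D x).2 = D := by
  unfold Fmap
  simp only
  have hfil : Finset.univ.filter (fun p => x p = 0) =
      Finset.univ.filter (fun p => ¬ (x p = 1)) := by
    apply Finset.filter_congr
    intro p _
    rcases zmod2_cases (x p) with h | h <;> rw [h] <;> simp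
  rw [hfil, Finset.prod_filter_mul_prod_filter_not]
  have : ∏ p : {p : ℕ // p ∈ D.primeFactors}, (p : ℕ) = ∏ p ∈ D.primeFactors, p :=
    Finset.prod_coe_sort D.primeFactors (fun p => p)
  rw [this, Nat.prod_primeFactors_of_squarefree hsq]

private lemma Fmap_pos (x : {p : ℕ // p ∈ D.primeFactors} → ZMod 2) :
    0 < (Fmap D x).1 ∧ 0 < (Fmap D x).2 := by
  constructor
  · rw [show (Fmap D x).1 = ∏ p ∈ Finset.univ.filter (fun p => x p = 1), (p:ℕ) from rfl]
    exact Finset.prod_pos (fun p _ => (Nat.prime_of_mem_primeFactors p.2).pos)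
  · rw [show (Fmap D x).2 = ∏ p ∈ Finset.univ.filter (fun p => x p = 0), (p:ℕ) from rfl]
    exact Finset.prod_pos (fun p _ => (Nat.prime_of_mem_primeFactors p.2).pos)

private lemma exists_sq_iff (hD : Odd D) (hsq : Squarefree D)
    (σ : {p : ℕ // p ∈ D.primeFactors} → Prop) [DecidablePred σ] (w : ℤ)
    (hw : ∀ p ∈ D.primeFactors, w.gcd p = 1) (A B : ℕ) (hAB : A * B = D)
    (hApf : A.primeFactors = (Finset.univ.filter σ).image Subtype.val)
    (hBpf : B.primeFactors = (Finset.univ.filter (fun q => ¬ σ q)).image Subtype.val) :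
    (∃ n : ℤ, w * A ≡ n ^ 2 [ZMOD (B:ℤ)]) ↔
      ∀ p : {p : ℕ // p ∈ D.primeFactors}, ¬ σ p →
        lg w ↑p + ∑ q ∈ Finset.univ.filter σ, lg ((q:ℕ):ℤ) ↑p = 0 := by
  have hD0 : D ≠ 0 := hsq.ne_zero
  have hA0 : A ≠ 0 := fun h => hD0 (by rw [← hAB, h, zero_mul])
  have hB0 : B ≠ 0 := fun h => hD0 (by rw [← hAB, h, mul_zero])
  have hsqA : Squarefree A := (Nat.squarefree_mul_iff.mp (hAB ▸ hsq)).2.1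
  have hsqB : Squarefree B := (Nat.squarefree_mul_iff.mp (hAB ▸ hsq)).2.2
  have hcoAB : Nat.Coprime A B := (Nat.squarefree_mul_iff.mp (hAB ▸ hsq)).1
  -- step 1 : congruence solvable iff IsSquare in ZMod B
  have step1 : (∃ n : ℤ, w * A ≡ n ^ 2 [ZMOD (B:ℤ)]) ↔ IsSquare ((w * A : ℤ) : ZMod B) := by
    constructor
    · rintro ⟨n, hn⟩
      refine ⟨(n : ZMod B), ?_⟩
      have h2 := (ZMod.intCast_eq_intCast_iff _ _ _).mpr hn
      push_cast at h2 ⊢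
      rw [h2]; ring
    · rintro ⟨z, hz⟩
      obtain ⟨n, rfl⟩ := ZMod.intCast_surjective z
      refine ⟨n, (ZMod.intCast_eq_intCast_iff _ _ _).mp ?_⟩
      push_cast at hz ⊢
      rw [hz]; ring
  rw [step1, isSquare_zmod_iff hsqB]
  -- step 3 : reindex the primes of B
  have step3 : (∀ P ∈ B.primeFactors, IsSquare ((w * A : ℤ) : ZMod P)) ↔
      ∀ p : {p : ℕ // p ∈ D.primeFactors}, ¬ σ p → IsSquare ((w * A : ℤ) : ZMod (p:ℕ)) := by
    rw [hBpf]
    constructor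
    · intro h p hp
      exact h ↑p (Finset.mem_image.mpr ⟨p, Finset.mem_filter.mpr ⟨Finset.mem_univ _, hp⟩, rfl⟩)
    · intro h P hP
      obtain ⟨q, hq, rfl⟩ := Finset.mem_image.mp hP
      exact h q (Finset.mem_filter.mp hq).2
  rw [step3]
  -- step 4/5 : pointwise translation
  apply forall_congr'
  intro p
  apply imp_congr_right
  intro hp
  have hpp : (p:ℕ).Prime := Nat.prime_of_mem_primeFactors p.2
  have hpo := odd_of_pf hD p.2
  -- p does not divide w * A
  have hndvd : ¬ ((p:ℕ):ℤ) ∣ w * (A:ℤ) := by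
    intro hdvd
    rcases Int.Prime.dvd_mul hpp hdvd with h | h
    · have hg' : Nat.gcd w.natAbs (p:ℕ) = 1 := by
        have := hw ↑p p.2
        simpa [Int.gcd, Int.natAbs_natCast] using this
      have hd1 : (p:ℕ) ∣ 1 := hg' ▸ Nat.dvd_gcd h dvd_rfl
      exact hpp.ne_one (Nat.dvd_one.mp hd1)
    · have hpA : (p:ℕ) ∣ A := by simpa using h
      have : (p:ℕ) ∈ A.primeFactors := Nat.mem_primeFactors.mpr ⟨hpp, hpA, hA0⟩
      rw [hApf] at this
      obtain ⟨q, hq, hqp⟩ := Finset.mem_image.mp this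
      have : q = p := Subtype.ext hqp
      subst this
      exact hp (Finset.mem_filter.mp hq).2
  rw [isSquare_iff_jacobi hpp hndvd, ← lg_eq_zero_iff]
  -- now translate lg (w * A) to the sum
  have hpA : ¬ (p:ℕ) ∣ A := by
    intro hdvd
    exact hndvd (Dvd.dvd.mul_left (Int.natCast_dvd_natCast.mpr hdvd) w)
  have hgA : ((A:ℤ)).gcd ↑(p:ℕ) = 1 := by
    have : Nat.Coprime (p:ℕ) A := (Nat.Prime.coprime_iff_not_dvd hpp).mpr hpA
    simpa [Int.gcd_natCast_natCast] using this.symm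
  have hsum : lg (A:ℤ) ↑p = ∑ q ∈ Finset.univ.filter σ, lg ((q:ℕ):ℤ) ↑p := by
    have hprodA : (A:ℤ) = ∏ q ∈ A.primeFactors, (q:ℤ) := by
      rw [← Nat.cast_prod, Nat.prod_primeFactors_of_squarefree hsqA]
    rw [hprodA, lg_prod (fun q hq => by
      have hqprime := Nat.prime_of_mem_primeFactors hq
      have hqD : q ∈ D.primeFactors := by
        rw [hApf] at hq
        obtain ⟨r, _, rfl⟩ := Finset.mem_image.mp hq
        exact r.2
      have hqodd := odd_of_pf hD hqD
      have hqnep : q ≠ (p:ℕ) := by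
        intro hqe
        subst hqe
        exact hpA (Nat.dvd_of_mem_primeFactors hq)
      rw [Int.gcd_natCast_natCast]
      exact (Nat.coprime_primes hqprime hpp).mpr hqnep)]
    rw [hApf, Finset.sum_image (fun a _ b _ hab => Subtype.ext hab)]
  rw [lg_mul (hw ↑p p.2) hgA, hsum]

private lemma Fmap_surj (hsq : Squarefree D) {a b : ℕ} (hab : a * b = D) :
    Fmap D (fun p => if (p:ℕ) ∣ a then 1 else 0) = (a, b) := by
  have hD0 : D ≠ 0 := hsq.ne_zero
  have ha0 : a ≠ 0 := fun h => hD0 (by rw [← hab, h, zero_mul])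
  have hb0 : b ≠ 0 := fun h => hD0 (by rw [← hab, h, mul_zero])
  obtain ⟨hco, hsqa, hsqb⟩ := Nat.squarefree_mul_iff.mp (hab ▸ hsq)
  set x : {p : ℕ // p ∈ D.primeFactors} → ZMod 2 := fun p => if (p:ℕ) ∣ a then 1 else 0 with hx
  have hx1 : ∀ p : {p : ℕ // p ∈ D.primeFactors}, x p = 1 ↔ (p:ℕ) ∣ a := by
    intro p
    by_cases h : (p:ℕ) ∣ a <;> simp [hx, h]
  have hx0 : ∀ p : {p : ℕ // p ∈ D.primeFactors}, x p = 0 ↔ ¬ (p:ℕ) ∣ a := by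
    intro p
    by_cases h : (p:ℕ) ∣ a <;> simp [hx, h]
  have hapf : a.primeFactors = (Finset.univ.filter (fun p => x p = 1)).image Subtype.val := by
    ext q
    simp only [Finset.mem_image, Finset.mem_filter, Finset.mem_univ, true_and]
    constructor
    · intro hq
      have hqD : q ∈ D.primeFactors := Nat.mem_primeFactors.mpr
        ⟨Nat.prime_of_mem_primeFactors hq, (Nat.dvd_of_mem_primeFactors hq).trans ⟨b, hab.symm⟩, hD0⟩
      exact ⟨⟨q, hqD⟩, (hx1 _).mpr (Nat.dvd_of_mem_primeFactors hq), rfl⟩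
    · rintro ⟨r, hr, rfl⟩
      exact Nat.mem_primeFactors.mpr ⟨Nat.prime_of_mem_primeFactors r.2, (hx1 r).mp hr, ha0⟩
  have hbpf : b.primeFactors = (Finset.univ.filter (fun p => x p = 0)).image Subtype.val := by
    ext q
    simp only [Finset.mem_image, Finset.mem_filter, Finset.mem_univ, true_and]
    constructor
    · intro hq
      have hqprime := Nat.prime_of_mem_primeFactors hq
      have hqb := Nat.dvd_of_mem_primeFactors hq
      have hqD : q ∈ D.primeFactors := Nat.mem_primeFactors.mpr
        ⟨hqprime, hqb.trans ⟨a, by rw [← hab, mul_comm]⟩, hD0⟩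
      refine ⟨⟨q, hqD⟩, (hx0 _).mpr ?_, rfl⟩
      intro hqa
      have : q ∣ Nat.gcd a b := Nat.dvd_gcd hqa hqb
      rw [hco] at this
      exact hqprime.ne_one (Nat.dvd_one.mp this)
    · rintro ⟨r, hr, rfl⟩
      have hrprime := Nat.prime_of_mem_primeFactors r.2
      have hra := (hx0 r).mp hr
      have hrD : (r:ℕ) ∣ a * b := hab.symm ▸ Nat.dvd_of_mem_primeFactors r.2
      rcases (Nat.Prime.dvd_mul hrprime).mp hrD with h | h
      · exact absurd h hra
      · exact Nat.mem_primeFactors.mpr ⟨hrprime, h, hb0⟩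
  have key : ∀ (N : ℕ), Squarefree N →
      ∀ (s : Finset {p : ℕ // p ∈ D.primeFactors}),
      N.primeFactors = s.image Subtype.val → ∏ p ∈ s, (p:ℕ) = N := by
    intro N hsqN s hs
    have h1 : ∏ p ∈ s, (p:ℕ) = ∏ q ∈ s.image Subtype.val, q := by
      rw [Finset.prod_image (fun a _ b _ hab => Subtype.ext hab)]
    rw [h1, ← hs, Nat.prod_primeFactors_of_squarefree hsqN]
  have hfst : (Fmap D x).1 = a := key a hsqa _ hapf
  have hsnd : (Fmap D x).2 = b := key b hsqb _ hbpf
  rw [← hfst, ← hsnd]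


private lemma filter_not_one (x : {p : ℕ // p ∈ D.primeFactors} → ZMod 2) :
    Finset.univ.filter (fun q => ¬ x q = 1) = Finset.univ.filter (fun q => x q = 0) := by
  apply Finset.filter_congr
  intro q _
  rcases zmod2_cases (x q) with h | h <;> rw [h] <;> simp

private lemma filter_not_zero (x : {p : ℕ // p ∈ D.primeFactors} → ZMod 2) :
    Finset.univ.filter (fun q => ¬ x q = 0) = Finset.univ.filter (fun q => x q = 1) := by
  apply Finset.filter_congr
  intro q _
  rcases zmod2_cases (x q) with h | h <;> rw [h] <;> simp

private lemma sub_sum_one (x : {p : ℕ // p ∈ D.primeFactors} → ZMod 2)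
    (p : {p : ℕ // p ∈ D.primeFactors}) (hxp : x p = 0) (f : {p : ℕ // p ∈ D.primeFactors} → ZMod 2) :
    ∑ q ∈ Finset.univ.erase p, f q * x q = ∑ q ∈ Finset.univ.filter (fun q => x q = 1), f q := by
  have h1 : ∀ q, f q * x q = if x q = 1 then f q else 0 := by
    intro q
    rcases zmod2_cases (x q) with h | h <;> rw [h] <;> simp
  calc ∑ q ∈ Finset.univ.erase p, f q * x q
      = ∑ q ∈ Finset.univ.erase p, (if x q = 1 then f q else 0) :=
        Finset.sum_congr rfl (fun q _ => h1 q)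
    _ = ∑ q ∈ Finset.univ, (if x q = 1 then f q else 0) :=
        Finset.sum_erase _ (by rw [hxp]; simp)
    _ = ∑ q ∈ Finset.univ.filter (fun q => x q = 1), f q := (Finset.sum_filter _ _).symm

private lemma sub_sum_zero (x : {p : ℕ // p ∈ D.primeFactors} → ZMod 2)
    (p : {p : ℕ // p ∈ D.primeFactors}) (hxp : x p = 1) (f : {p : ℕ // p ∈ D.primeFactors} → ZMod 2) :
    (∑ q ∈ Finset.univ.erase p, f q) + ∑ q ∈ Finset.univ.erase p, f q * x q =
      ∑ q ∈ Finset.univ.filter (fun q => x q = 0), f q := by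
  have h1 : ∀ q, f q + f q * x q = if x q = 0 then f q else 0 := by
    intro q
    rcases zmod2_cases (x q) with h | h <;> rw [h] <;>
      simp <;> · have := zadd_self' (f q); simp_all
  calc (∑ q ∈ Finset.univ.erase p, f q) + ∑ q ∈ Finset.univ.erase p, f q * x q
      = ∑ q ∈ Finset.univ.erase p, (f q + f q * x q) := Finset.sum_add_distrib.symm
    _ = ∑ q ∈ Finset.univ.erase p, (if x q = 0 then f q else 0) :=
        Finset.sum_congr rfl (fun q _ => h1 q)
    _ = ∑ q ∈ Finset.univ, (if x q = 0 then f q else 0) :=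
        Finset.sum_erase _ (by rw [hxp]; simp)
    _ = ∑ q ∈ Finset.univ.filter (fun q => x q = 0), f q := (Finset.sum_filter _ _).symm

private lemma ecard_eq (hD : Odd D) (hsq : Squarefree D) (hpos : 0 < D)
    (u v : ℤ) (hu : ∀ p ∈ D.primeFactors, u.gcd p = 1) (hv : ∀ p ∈ D.primeFactors, v.gcd p = 1)
    (M : Matrix {p : ℕ // p ∈ D.primeFactors} {p : ℕ // p ∈ D.primeFactors} (ZMod 2))
    (c : {p : ℕ // p ∈ D.primeFactors} → ZMod 2)
    (hM : ∀ p q, q ≠ p → M p q = lg ((q:ℕ):ℤ) (p:ℕ))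
    (hc : ∀ p, c p = lg u (p:ℕ))
    (hdiag : ∀ p, M p p = (∑ r ∈ Finset.univ.erase p, lg ((r:ℕ):ℤ) (p:ℕ))
      + lg u (p:ℕ) + lg v (p:ℕ)) :
    Ecard D u v = Nat.card {x | M.mulVec x = c} := by
  classical
  set S : Set (ℕ × ℕ) := {p : ℕ × ℕ | 0 < p.1 ∧ 0 < p.2 ∧ p.1 * p.2 = D ∧
    (∃ n : ℤ, u * p.1 ≡ n ^ 2 [ZMOD (p.2 : ℤ)]) ∧
    (∃ n : ℤ, v * p.2 ≡ n ^ 2 [ZMOD (p.1 : ℤ)])} with hS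
  have key : ∀ x, Fmap D x ∈ S ↔ M.mulVec x = c := by
    intro x
    have hpos' := Fmap_pos (D := D) x
    have hmul := Fmap_mul hsq x
    have hfst := Fmap_fst_primeFactors (D := D) x
    have hsnd := Fmap_snd_primeFactors (D := D) x
    have hmem : Fmap D x ∈ S ↔
        ((∃ n : ℤ, u * ((Fmap D x).1 : ℤ) ≡ n ^ 2 [ZMOD ((Fmap D x).2 : ℤ)]) ∧
         (∃ n : ℤ, v * ((Fmap D x).2 : ℤ) ≡ n ^ 2 [ZMOD ((Fmap D x).1 : ℤ)])) := by
      rw [hS]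
      simp only [Set.mem_setOf_eq]
      exact ⟨fun h => ⟨h.2.2.2.1, h.2.2.2.2⟩, fun h => ⟨hpos'.1, hpos'.2, hmul, h.1, h.2⟩⟩
    -- condition 1
    have hc1 := exists_sq_iff hD hsq (fun q => x q = 1) u hu
      (Fmap D x).1 (Fmap D x).2 hmul hfst (by rw [filter_not_one x]; exact hsnd)
    -- condition 2
    have hc2 := exists_sq_iff hD hsq (fun q => x q = 0) v hv
      (Fmap D x).2 (Fmap D x).1 (by rw [mul_comm]; exact hmul) hsnd
      (by rw [filter_not_zero x]; exact hfst)
    rw [hmem, hc1, hc2]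
    -- now the matrix equation
    have hrow : ∀ p, M.mulVec x p = M p p * x p + ∑ q ∈ Finset.univ.erase p,
        lg ((q:ℕ):ℤ) (p:ℕ) * x q := by
      intro p
      rw [mulVec_eq]
      rw [← Finset.add_sum_erase _ _ (Finset.mem_univ p)]
      congr 1
      exact Finset.sum_congr rfl (fun q hq => by rw [hM p q (Finset.mem_erase.mp hq).1])
    constructor
    · rintro ⟨h1, h2⟩
      funext p
      rw [hrow p, hc p]
      rcases zmod2_cases (x p) with hxp | hxp
      · have e1 := h1 p (fun h => by
          have h2 : (1 : ZMod 2) = 0 := by rw [← show x p = 1 from h, hxp]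
          exact one_ne_zero h2)
        rw [hxp, mul_zero, zero_add, sub_sum_one x p hxp]
        rw [zmod2_addeq] at e1
        exact e1
      · have e2 := h2 p (fun h => by
          have h2 : (1 : ZMod 2) = 0 := by rw [← hxp, show x p = 0 from h]
          exact one_ne_zero h2)
        rw [hxp, mul_one, hdiag p]
        have hs := sub_sum_zero x p hxp (fun q => lg ((q:ℕ):ℤ) (p:ℕ))
        rw [← hs] at e2
        -- e2 : lg v p + (r + Σe) = 0 ; goal : (r + lg u + lg v) + Σe = lg u
        have hz : ∀ r a b s : ZMod 2, b + (r + s) = 0 → r + a + b + s = a := by decide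
        exact hz _ _ _ _ e2
    · intro h
      have hp : ∀ p, M.mulVec x p = c p := fun p => by rw [h]
      constructor
      · intro p hxp1
        have hxp : x p = 0 := by
          rcases zmod2_cases (x p) with h' | h'
          · exact h'
          · exact absurd h' hxp1
        have := hp p
        rw [hrow p, hc p, hxp, mul_zero, zero_add, sub_sum_one x p hxp] at this
        rw [zmod2_addeq]
        exact this
      · intro p hxp0
        have hxp : x p = 1 := by
          rcases zmod2_cases (x p) with h' | h'
          · exact absurd h' hxp0
          · exact h'
        have := hp p
        rw [hrow p, hc p, hxp, mul_one, hdiag p] at this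
        have hs := sub_sum_zero x p hxp (fun q => lg ((q:ℕ):ℤ) (p:ℕ))
        rw [← hs]
        have hz : ∀ r a b s : ZMod 2, r + a + b + s = a → b + (r + s) = 0 := by decide
        exact hz _ _ _ _ this
  have himg : S = Fmap D '' {x | M.mulVec x = c} := by
    ext ab
    constructor
    · intro h
      have hab : ab.1 * ab.2 = D := by
        rw [hS] at h
        exact h.2.2.1
      have hsur := Fmap_surj hsq hab
      refine ⟨_, ?_, hsur⟩
      have : Fmap D (fun p => if (p:ℕ) ∣ ab.1 then 1 else 0) ∈ S := by rw [hsur]; exact h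
      exact (key _).mp this
    · rintro ⟨x, hx, rfl⟩
      exact (key x).mpr hx
  show Set.ncard S = _
  rw [himg, Set.ncard_image_of_injective _ Fmap_injective, ← Nat.card_coe_set_eq]

end Encoding


theorem Ecard_ineq_three_mod_four (D : ℕ) (hD : Odd D) (hsq : Squarefree D) (hpos : 0 < D)
    (hmod : D % 4 = 3) :
    Ecard D (-1) 1 + Ecard D (-2) 2 ≤ Ecard D 1 1 ∧
      Ecard D 1 1 ≤ 2 * Ecard D (-1) 1 + 2 * Ecard D (-2) 2 := by
  classical
  -- gcd facts
  have hg1 : ∀ p ∈ D.primeFactors, (1:ℤ).gcd p = 1 := by intro p _; simp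
  have hgm1 : ∀ p ∈ D.primeFactors, (-1:ℤ).gcd p = 1 := by intro p _; simp
  have hg2 : ∀ p ∈ D.primeFactors, (2:ℤ).gcd p = 1 := by
    intro p hp
    have h2 : Nat.Coprime 2 p := Nat.coprime_two_left.mpr (odd_of_pf hD hp).1
    simpa [Int.gcd] using h2
  have hgm2 : ∀ p ∈ D.primeFactors, (-2:ℤ).gcd p = 1 := by
    intro p hp
    have h2 : Nat.Coprime 2 p := Nat.coprime_two_left.mpr (odd_of_pf hD hp).1
    simpa [Int.gcd] using h2
  -- the matrix and vectors
  set dd : {p : ℕ // p ∈ D.primeFactors} → ZMod 2 := fun p => lg (-1) (p:ℕ) with hdd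
  set X : Matrix {p : ℕ // p ∈ D.primeFactors} {p : ℕ // p ∈ D.primeFactors} (ZMod 2) :=
    Matrix.of (fun p q => if q = p then ∑ r ∈ Finset.univ.erase p, lg ((r:ℕ):ℤ) (p:ℕ)
      else lg ((q:ℕ):ℤ) (p:ℕ)) with hX
  have hXod : ∀ p q, q ≠ p → X p q = lg ((q:ℕ):ℤ) (p:ℕ) := by
    intro p q h
    rw [hX]
    simp only [Matrix.of_apply]
    rw [if_neg h]
  have hXd : ∀ p, X p p = ∑ r ∈ Finset.univ.erase p, lg ((r:ℕ):ℤ) (p:ℕ) := by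
    intro p
    rw [hX]
    simp
  set Y := X + Matrix.diagonal dd with hY
  have hYod : ∀ p q, q ≠ p → Y p q = lg ((q:ℕ):ℤ) (p:ℕ) := by
    intro p q h
    rw [hY]
    simp only [Matrix.add_apply, Matrix.diagonal_apply]
    rw [if_neg (fun he => h (he.symm)), add_zero, hXod p q h]
  have hYd : ∀ p, Y p p = (∑ r ∈ Finset.univ.erase p, lg ((r:ℕ):ℤ) (p:ℕ)) + dd p := by
    intro p
    rw [hY]
    simp only [Matrix.add_apply, Matrix.diagonal_apply, eq_self_iff_true, if_true]
    rw [hXd p]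
  -- identification of the three Ecards
  have hE11 : Ecard D 1 1 = Nat.card {x | X.mulVec x = (fun _ => (0 : ZMod 2))} := by
    apply ecard_eq hD hsq hpos 1 1 hg1 hg1
    · exact hXod
    · intro p; rw [lg_one]
    · intro p; rw [hXd p, lg_one, add_zero, add_zero]
  have hEm11 : Ecard D (-1) 1 = Nat.card {x | Y.mulVec x = dd} := by
    apply ecard_eq hD hsq hpos (-1) 1 hgm1 hg1
    · exact hYod
    · intro p; rw [hdd]
    · intro p; rw [hYd p, lg_one, add_zero, hdd]
  have hEm22 : Ecard D (-2) 2 = Nat.card {x | Y.mulVec x = (fun q => lg (-2) q.val)} := by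
    apply ecard_eq hD hsq hpos (-2) 2 hgm2 hg2
    · exact hYod
    · intro p; rfl
    · intro p
      rw [hYd p, hdd]
      have hsplit : lg (-2) p.val = lg (-1) p.val + lg (2:ℤ) p.val := by
        rw [show (-2 : ℤ) = (-1) * 2 by norm_num]
        exact lg_mul (hgm1 ↑p p.2) (hg2 ↑p p.2)
      rw [hsplit]
      have hz : ∀ r a b : ZMod 2, r + a = r + (a + b) + b := by decide
      exact hz _ _ _
  -- row sums of X vanish
  have hrow : ∀ p, ∑ q, X p q = 0 := by
    intro p
    rw [← Finset.add_sum_erase _ _ (Finset.mem_univ p), hXd p]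
    rw [Finset.sum_congr rfl (fun q hq => hXod p q (Finset.mem_erase.mp hq).1)]
    exact zadd_self' _
  -- quasi-symmetry
  have htr : ∀ p q, p ≠ q → X q p = X p q + dd p * dd q := by
    intro p q h
    have hpq : (p:ℕ) ≠ (q:ℕ) := fun he => h (Subtype.ext he)
    rw [hXod q p h, hXod p q (Ne.symm h)]
    have hsym := lg_symm (Nat.prime_of_mem_primeFactors p.2) (Nat.prime_of_mem_primeFactors q.2)
      (odd_of_pf hD p.2).2 (odd_of_pf hD q.2).2 hpq
    have hz : ∀ a b c : ZMod 2, a + b = c → b = a + c := by decide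
    rw [hdd]
    exact hz _ _ _ hsym
  -- sum of dd is 1
  have hd1 : ∑ p, dd p = 1 := by
    rw [hdd]
    rw [Finset.sum_coe_sort D.primeFactors (fun p => lg (-1) p)]
    exact sum_lg_neg_one hD hsq hmod
  -- Y's fiber over dd is nonempty (witness : all-ones vector)
  have hone : Y.mulVec (fun _ => 1) = dd := by
    funext p
    rw [mulVec_eq]
    simp only [mul_one]
    calc ∑ q, Y p q = ∑ q, (X p q + Matrix.diagonal dd p q) := by rw [hY]; rfl
      _ = (∑ q, X p q) + ∑ q, Matrix.diagonal dd p q := Finset.sum_add_distrib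
      _ = dd p := by
          rw [hrow p, zero_add]
          simp [Matrix.diagonal_apply, Finset.sum_ite_eq']
  -- main counting identity
  have hcount := card_ker_eq_two_mul X dd hrow htr hd1
  -- fibers of Y
  have hker0 : ∃ x, Y.mulVec x = (fun _ => (0:ZMod 2)) := ⟨0, by rw [Matrix.mulVec_zero]; rfl⟩
  have hkerd : ∃ x, Y.mulVec x = dd := ⟨(fun _ => 1), hone⟩
  have hb1k : Nat.card {x | Y.mulVec x = dd} = Nat.card {x | Y.mulVec x = (fun _ => (0:ZMod 2))} :=
    le_antisymm (fiber_card_le Y (fun _ => (0:ZMod 2)) dd hker0)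
      (fiber_card_le Y dd (fun _ => (0:ZMod 2)) hkerd)
  have hb2k : Nat.card {x | Y.mulVec x = (fun q => lg (-2) q.val)} ≤
      Nat.card {x | Y.mulVec x = (fun _ => (0:ZMod 2))} :=
    fiber_card_le Y (fun _ => (0:ZMod 2)) (fun q => lg (-2) q.val) hker0
  -- assemble
  have hker0' : {x | Y.mulVec x = (fun _ => (0:ZMod 2))} = {x | Y.mulVec x = 0} := rfl
  have hE11' : Ecard D 1 1 = Nat.card {x | X.mulVec x = 0} := hE11
  rw [← hY] at hcount
  rw [hker0'] at hb1k hb2k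
  have h1 : Ecard D 1 1 = 2 * Nat.card {x | Y.mulVec x = 0} := by rw [hE11']; exact hcount
  have h2 : Ecard D (-1) 1 = Nat.card {x | Y.mulVec x = 0} := by rw [hEm11]; exact hb1k
  have h3 : Ecard D (-2) 2 ≤ Nat.card {x | Y.mulVec x = 0} := by rw [hEm22]; exact hb2k
  omega
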